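/- arXiv:1404.6811 — 4 statements merged into one kernel-verified Lean document; each statement's English description precedes it below -/
import Mathlib

section
/- Let z_1, ..., z_n be integers such that 1 is the greatest common divisor of all of them (gcd(z_1,...,z_n) = 1). Then there exists an n × n integer matrix A whose first row is (z_1, ..., z_n) and whose determinant is 1 or -1. -/
open Matrix

/-- Bezout for finset gcd over ℤ. -/
lemma bezout_finset {β : Type*} [DecidableEq β] (s : Finset β) (z : β → ℤ) :
    ∃ c : β → ℤ, ∑ i ∈ s, c i * z i = s.gcd z := by
  induction s using Finset.induction_on with
  | empty => exact ⟨0, by simp⟩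
  | @insert a s ha ih =>
    obtain ⟨c, hc⟩ := ih
    set g := s.gcd z with hg
    refine ⟨Function.update (fun i => Int.gcdB (z a) g * c i) a (Int.gcdA (z a) g), ?_⟩
    rw [Finset.sum_insert ha, Finset.gcd_insert, Function.update_self]
    have h1 : ∑ i ∈ s, Function.update (fun i => Int.gcdB (z a) g * c i) a
        (Int.gcdA (z a) g) i * z i = Int.gcdB (z a) g * g := by
      rw [← hc, Finset.mul_sum]
      refine Finset.sum_congr rfl fun i hi => ?_
      rw [Function.update_of_ne (ne_of_mem_of_not_mem hi ha)]
      ring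
    rw [h1, ← Int.coe_gcd, Int.gcd_eq_gcd_ab (z a) g]
    ring

theorem stmt_0 (n : ℕ) (hn : 0 < n) (z : Fin n → ℤ)
    (hgcd : Finset.univ.gcd z = 1) :
    ∃ A : Matrix (Fin n) (Fin n) ℤ,
      (∀ j, A ⟨0, hn⟩ j = z j) ∧ (A.det = 1 ∨ A.det = -1) := by
  classical
  -- the linear functional x ↦ ∑ z i * x i
  set f : (Fin n → ℤ) →ₗ[ℤ] ℤ :=
    { toFun := fun x => ∑ i, z i * x i
      map_add' := fun x y => by simp [mul_add, Finset.sum_add_distrib]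
      map_smul' := fun t x => by
        simp only [Pi.smul_apply, smul_eq_mul, RingHom.id_apply, Finset.mul_sum]
        exact Finset.sum_congr rfl fun i _ => by ring } with hfdef
  have hfapp : ∀ x, f x = ∑ i, z i * x i := fun x => rfl
  -- a vector v with f v = 1
  obtain ⟨c, hc⟩ := bezout_finset Finset.univ z
  have hfv : f c = 1 := by
    rw [hfapp, ← hgcd, ← hc]
    exact Finset.sum_congr rfl fun i _ => by ring
  set v := c with hv
  set K := LinearMap.ker f with hK
  obtain ⟨m, bK⟩ := Submodule.basisOfPid (Pi.basisFun ℤ (Fin n)) K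
  set w : Fin (m + 1) → (Fin n → ℤ) := Fin.cons v (fun j => (bK j : Fin n → ℤ)) with hw
  have hw0 : w 0 = v := rfl
  have hws : ∀ j : Fin m, w j.succ = (bK j : Fin n → ℤ) := fun j => rfl
  have hfw0 : f (w 0) = 1 := hfv
  have hfws : ∀ j : Fin m, f (w j.succ) = 0 := fun j => (LinearMap.mem_ker.mp (bK j).2)
  -- linear independence
  have hli : LinearIndependent ℤ w := by
    rw [Fintype.linearIndependent_iff]
    intro g hg
    have hg0 : g 0 = 0 := by
      have h := congrArg f hg
      rw [map_sum, map_zero] at h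
      simp only [_root_.map_smul, smul_eq_mul] at h
      rw [Fin.sum_univ_succ, hfw0, mul_one] at h
      simpa [hfws] using h
    have hrest : ∀ j : Fin m, g j.succ = 0 := by
      rw [Fin.sum_univ_succ, hg0, zero_smul, zero_add] at hg
      have hsum : ((∑ j : Fin m, g j.succ • bK j : K) : Fin n → ℤ) = 0 := by
        push_cast
        simpa [hws] using hg
      have : (∑ j : Fin m, g j.succ • bK j : K) = 0 := Subtype.ext hsum
      exact Fintype.linearIndependent_iff.mp bK.linearIndependent _ this
    intro i
    exact Fin.cases hg0 hrest i
  -- spanning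
  have hKle : K ≤ Submodule.span ℤ (Set.range w) := by
    rw [← Submodule.map_subtype_top K, ← bK.span_eq, Submodule.map_span]
    apply Submodule.span_le.mpr
    rintro x ⟨y, ⟨j, rfl⟩, rfl⟩
    exact Submodule.subset_span ⟨j.succ, (hws j).symm⟩
  have hsp : ⊤ ≤ Submodule.span ℤ (Set.range w) := by
    intro x _
    have hxk : x - f x • v ∈ K := by
      rw [hK, LinearMap.mem_ker, map_sub, _root_.map_smul, hfv, smul_eq_mul, mul_one, sub_self]
    have hvmem : v ∈ Submodule.span ℤ (Set.range w) :=
      Submodule.subset_span ⟨0, hw0⟩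
    have : x = (x - f x • v) + f x • v := by abel
    rw [this]
    exact Submodule.add_mem _ (hKle hxk) (Submodule.smul_mem _ _ hvmem)
  set B : Module.Basis (Fin (m + 1)) ℤ (Fin n → ℤ) := Module.Basis.mk hli hsp with hB
  set e : Fin (m + 1) ≃ Fin n := B.indexEquiv (Pi.basisFun ℤ (Fin n)) with he
  set C : Module.Basis (Fin n) ℤ (Fin n → ℤ) := B.reindex e with hCdef
  set i₀ : Fin n := e 0 with hi₀
  have hC0 : C i₀ = v := by
    rw [hCdef, Module.Basis.reindex_apply, hi₀, Equiv.symm_apply_apply, hB, Module.Basis.coe_mk]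
    exact hw0
  have hCK : ∀ j, j ≠ i₀ → f (C j) = 0 := by
    intro j hj
    have h0 : e.symm j ≠ 0 := fun h => hj (by rw [hi₀, ← h, Equiv.apply_symm_apply])
    obtain ⟨k, hk⟩ := Fin.eq_succ_of_ne_zero h0
    rw [hCdef, Module.Basis.reindex_apply, hB, Module.Basis.coe_mk, hk]
    exact hfws k
  set P : Matrix (Fin n) (Fin n) ℤ := (Pi.basisFun ℤ (Fin n)).toMatrix C with hP
  have hPapp : ∀ i j, P i j = C j i := fun i j => by
    rw [hP, Module.Basis.toMatrix_apply, Pi.basisFun_repr]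
  have hinv : Invertible P := (Pi.basisFun ℤ (Fin n)).invertibleToMatrix C
  set Q : Matrix (Fin n) (Fin n) ℤ := ⅟P with hQ
  have hPQ : P * Q = 1 := mul_invOf_self P
  have hrow : ∀ j, (∑ i, z i * P i j) = if j = i₀ then 1 else 0 := by
    intro j
    have : ∑ i, z i * P i j = f (C j) := by
      rw [hfapp]
      exact Finset.sum_congr rfl fun i _ => by rw [hPapp]
    rw [this]
    by_cases hj : j = i₀
    · rw [if_pos hj, hj, hC0]; exact hfv
    · rw [if_neg hj]; exact hCK j hj
  have hzQ : ∀ j, Q i₀ j = z j := by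
    intro j
    calc Q i₀ j = ∑ k, (if k = i₀ then (1 : ℤ) else 0) * Q k j := by
          rw [Finset.sum_eq_single i₀]
          · rw [if_pos rfl, one_mul]
          · intro k _ hk; rw [if_neg hk, zero_mul]
          · intro h; exact absurd (Finset.mem_univ i₀) h
      _ = ∑ k, (∑ i, z i * P i k) * Q k j := by
          exact Finset.sum_congr rfl fun k _ => by rw [hrow]
      _ = ∑ k, ∑ i, z i * P i k * Q k j := by
          exact Finset.sum_congr rfl fun k _ => by rw [Finset.sum_mul]
      _ = ∑ i, ∑ k, z i * P i k * Q k j := Finset.sum_comm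
      _ = ∑ i, z i * ∑ k, P i k * Q k j := by
          refine Finset.sum_congr rfl fun i _ => ?_
          rw [Finset.mul_sum]
          exact Finset.sum_congr rfl fun k _ => by ring
      _ = ∑ i, z i * (P * Q) i j := by
          exact Finset.sum_congr rfl fun i _ => by rw [Matrix.mul_apply]
      _ = ∑ i, z i * (1 : Matrix (Fin n) (Fin n) ℤ) i j := by rw [hPQ]
      _ = z j := by simp [Matrix.one_apply]
  set σ : Equiv.Perm (Fin n) := Equiv.swap ⟨0, hn⟩ i₀ with hσ
  refine ⟨Matrix.of fun i j => Q (σ i) j, ?_, ?_⟩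
  · intro j
    show Q (σ ⟨0, hn⟩) j = z j
    rw [hσ, Equiv.swap_apply_left]
    exact hzQ j
  · have hdet : (Matrix.of fun i j => Q (σ i) j).det = (Equiv.Perm.sign σ : ℤ) * Q.det :=
      Matrix.det_permute σ Q
    have hQunit : IsUnit Q.det := by
      apply IsUnit.of_mul_eq_one P.det
      rw [← Matrix.det_mul, hQ, invOf_mul_self, Matrix.det_one]
    have hsu : IsUnit ((Equiv.Perm.sign σ : ℤˣ) : ℤ) := (Equiv.Perm.sign σ).isUnit
    have : IsUnit (Matrix.of fun i j => Q (σ i) j).det := by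
      rw [hdet]; exact hsu.mul hQunit
    exact Int.isUnit_iff.mp this
end

section
/- Let 0 → K → V →^{exp} F* → 1 be an exact sequence where V is a ℚ-vector space, F an algebraically closed field of characteristic 0, and exp a surjective group homomorphism from (V,+) to (F*,·) with kernel K. If L ⊆ V^n is a ℚ-affine subspace (a 'linear set'), then exp(L) ⊆ (F*)^n (coordinatewise exp) is a torus, i.e., is defined by finitely many equations of the form ∏ x_i^{z_i} = c with z_i ∈ ℤ, c ∈ F*. -/
/-- A torus in `(F*)^n`: a set defined by finitely many equations of the form
`∏ i, x i ^ z i = c` with integer exponents and `c ∈ F*`. -/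
def IsTorus {F : Type*} [Field F] {n : ℕ} (T : Set (Fin n → Fˣ)) : Prop :=
  ∃ (m : ℕ) (z : Fin m → Fin n → ℤ) (c : Fin m → Fˣ),
    T = {x | ∀ j, ∏ i, x i ^ z j i = c j}

private lemma exists_int_mul_eq' {n : ℕ} (s : Fin n → ℚ) :
    ∃ d : ℤ, d ≠ 0 ∧ ∀ i, ∃ z : ℤ, (z : ℚ) = d * s i := by
  refine ⟨∏ i, ((s i).den : ℤ), ?_, ?_⟩
  · rw [Finset.prod_ne_zero_iff]
    intro i _
    exact_mod_cast (s i).den_nz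
  · intro i
    obtain ⟨e, he⟩ : ((s i).den : ℤ) ∣ ∏ j, ((s j).den : ℤ) :=
      Finset.dvd_prod_of_mem _ (Finset.mem_univ i)
    refine ⟨e * (s i).num, ?_⟩
    have h0 : ((s i).den : ℚ) ≠ 0 := by exact_mod_cast (s i).den_nz
    have hden : ((s i).num : ℚ) = s i * (s i).den :=
      (div_eq_iff h0).mp (Rat.num_div_den (s i))
    push_cast [he]
    rw [hden]
    ring

private lemma lattice_lemma' {n : ℕ} (S : Submodule ℚ (Fin n → ℚ)) :
    ∃ (r : ℕ) (σ : Fin r → Fin n → ℤ) (β : Fin n → Fin r → ℤ),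
      (∀ j, (fun i => (σ j i : ℚ)) ∈ S) ∧
      (S ≤ Submodule.span ℚ (Set.range fun j => fun i => ((σ j i : ℚ)))) ∧
      (∀ j j', ∑ i, σ j i * β i j' = if j = j' then 1 else 0) := by
  classical
  set ι : (Fin n → ℤ) →ₗ[ℤ] (Fin n → ℚ) :=
    LinearMap.compLeft ((Int.castRingHom ℚ).toAddMonoidHom.toIntLinearMap) (Fin n) with hιdef
  have hι : ∀ z : Fin n → ℤ, ι z = fun i => ((z i : ℚ)) := fun z => rfl
  set Λ : Submodule ℤ (Fin n → ℤ) := (S.restrictScalars ℤ).comap ι with hΛdef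
  obtain ⟨r, bM, bN, f, a, hsnf⟩ := Λ.smithNormalForm (Pi.basisFun ℤ (Fin n))
  have ha : ∀ j, (a j : ℚ) ≠ 0 := by
    intro j h
    have h0 : a j = 0 := by exact_mod_cast h
    apply bN.ne_zero j
    have : (bN j : Fin n → ℤ) = 0 := by rw [hsnf j, h0, zero_smul]
    exact Subtype.ext this
  refine ⟨r, fun j => bM (f j), fun i j => bM.repr (Pi.single i 1) (f j), ?_, ?_, ?_⟩
  · -- membership
    intro j
    have hmem : ι ((bN j : Fin n → ℤ)) ∈ S := (bN j).2
    rw [hsnf j, map_smul] at hmem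
    have hmem' : (a j : ℚ) • ι (bM (f j)) ∈ S := by
      rwa [Int.cast_smul_eq_zsmul]
    have := S.smul_mem ((a j : ℚ))⁻¹ hmem'
    rwa [inv_smul_smul₀ (ha j)] at this
  · -- spanning
    intro s hs
    obtain ⟨d, hd, hz⟩ := exists_int_mul_eq' s
    choose z hzq using hz
    have hd' : ((d : ℚ)) ≠ 0 := by exact_mod_cast hd
    have hzv : ι z = (d : ℚ) • s := by
      funext i
      rw [hι]
      simpa [smul_eq_mul] using hzq i
    have hzΛ : z ∈ Λ := by
      simp only [hΛdef, Submodule.mem_comap, Submodule.restrictScalars_mem, hzv]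
      exact S.smul_mem _ hs
    obtain ⟨c, hc⟩ := bN.mem_submodule_iff'.mp hzΛ
    have hseq : s = (d : ℚ)⁻¹ • ι z := by rw [hzv, inv_smul_smul₀ hd']
    rw [hseq]
    refine Submodule.smul_mem _ _ ?_
    rw [hc, map_sum]
    refine Submodule.sum_mem _ fun j _ => ?_
    rw [map_smul, ← Int.cast_smul_eq_zsmul ℚ]
    refine Submodule.smul_mem _ _ ?_
    have heq : ι ((bN j : Fin n → ℤ)) = (a j : ℚ) • (fun i => ((bM (f j) i : ℚ))) := by
      rw [hsnf j, map_smul, ← Int.cast_smul_eq_zsmul ℚ]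
      rfl
    rw [heq]
    exact Submodule.smul_mem _ _ (Submodule.subset_span (Set.mem_range_self j))
  · -- duality
    intro j j'
    have key : ∀ g : Fin n → ℤ,
        ∑ i, g i * bM.repr (Pi.single i 1) (f j') = bM.repr g (f j') := by
      intro g
      conv_rhs => rw [← Finset.univ_sum_single g]
      rw [map_sum, Finsupp.finset_sum_apply]
      refine Finset.sum_congr rfl fun i _ => ?_
      have : (Pi.single i (g i) : Fin n → ℤ) = g i • Pi.single i (1 : ℤ) := by
        rw [← Pi.single_smul, smul_eq_mul, mul_one]
      rw [this, map_smul, Finsupp.smul_apply, smul_eq_mul]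
    rw [key (bM (f j)), Module.Basis.repr_self, Finsupp.single_apply]
    simp [f.injective.eq_iff]

theorem stmt_8 {V F : Type*} [AddCommGroup V] [Module ℚ V] [Field F]
    [IsAlgClosed F] [CharZero F]
    (exp : V → Fˣ) (hexp : ∀ u v : V, exp (u + v) = exp u * exp v)
    (hsurj : Function.Surjective exp)
    {n m : ℕ} (q : Fin m → Fin n → ℚ) (a : Fin m → V) :
    IsTorus ((fun v : Fin n → V => fun i => exp (v i)) ''
      {v : Fin n → V | ∀ j, ∑ i, q j i • v i = a j}) := by
  classical
  -- exp turns integer combinations into monomials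
  have expdot : ∀ {k : ℕ} (z : Fin k → ℤ) (g : Fin k → V),
      exp (∑ i, z i • g i) = ∏ i, exp (g i) ^ z i := by
    intro k z g
    let E : V →+ Additive Fˣ := AddMonoidHom.mk' (fun v => Additive.ofMul (exp v)) hexp
    calc exp (∑ i, z i • g i) = Additive.toMul (E (∑ i, z i • g i)) := rfl
      _ = Additive.toMul (∑ i, z i • E (g i)) := by
          rw [map_sum]
          congr 1
          exact Finset.sum_congr rfl fun i _ => map_zsmul E _ _
      _ = ∏ i, exp (g i) ^ z i := by
          rw [toMul_sum]
          refine Finset.prod_congr rfl fun i _ => ?_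
          rw [toMul_zsmul]
          rfl
  by_cases hL : ∃ v0 : Fin n → V, ∀ j, ∑ i, q j i • v0 i = a j
  swap
  · -- the linear set is empty, use the unsatisfiable equation 1 = 2
    have hempty : {v : Fin n → V | ∀ j, ∑ i, q j i • v i = a j} = ∅ :=
      Set.eq_empty_iff_forall_notMem.mpr fun v hv => hL ⟨v, hv⟩
    rw [hempty, Set.image_empty]
    refine ⟨1, fun _ _ => 0, fun _ => Units.mk0 (2 : F) two_ne_zero, ?_⟩
    ext x
    simp only [Set.mem_empty_iff_false, Set.mem_setOf_eq, false_iff]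
    intro h
    have h0 := h 0
    simp only [zpow_zero, Finset.prod_const_one] at h0
    have := congrArg Units.val h0
    norm_num at this
  obtain ⟨v0, hv0⟩ := hL
  obtain ⟨r, σ, β, hσS, hspan, hβ⟩ := lattice_lemma' (Submodule.span ℚ (Set.range q))
  -- vanishing on a set of linear forms extends to the span
  have hker : ∀ (w : Fin n → V) (G : Set (Fin n → ℚ)), (∀ s ∈ G, ∑ i, s i • w i = 0) →
      ∀ s ∈ Submodule.span ℚ G, ∑ i, s i • w i = 0 := by
    intro w G hG s hs
    let φ : (Fin n → ℚ) →ₗ[ℚ] V :=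
      { toFun := fun s => ∑ i, s i • w i
        map_add' := fun s₁ s₂ => by simp [add_smul, Finset.sum_add_distrib]
        map_smul' := fun c s => by simp [Finset.smul_sum, mul_smul] }
    have hle : Submodule.span ℚ G ≤ LinearMap.ker φ :=
      Submodule.span_le.mpr fun g hg => hG g hg
    exact hle hs
  refine ⟨r, σ, fun j => exp (∑ i, σ j i • v0 i), ?_⟩
  ext x
  simp only [Set.mem_image, Set.mem_setOf_eq]
  constructor
  · rintro ⟨v, hv, rfl⟩ j
    rw [← expdot]
    congr 1
    have hw : ∀ t, ∑ i, q t i • (v i - v0 i) = 0 := by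
      intro t
      simp [smul_sub, Finset.sum_sub_distrib, hv t, hv0 t]
    have h0 : ∑ i, ((σ j i : ℚ)) • (v i - v0 i) = 0 :=
      hker _ _ (by rintro _ ⟨t, rfl⟩; exact hw t) _ (hσS j)
    have h0' : ∑ i, σ j i • (v i - v0 i) = 0 := by
      rw [← h0]
      exact Finset.sum_congr rfl fun i _ => (Int.cast_smul_eq_zsmul ℚ _ _).symm
    rw [← sub_eq_zero, ← Finset.sum_sub_distrib]
    simpa [smul_sub] using h0'
  · intro hx
    choose u hu using fun i => hsurj (x i)
    set w : Fin n → V := fun i => u i - v0 i with hwdef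
    set κ : Fin r → V := fun j => ∑ i, σ j i • w i with hκdef
    have hκ1 : ∀ j, exp (κ j) = 1 := by
      intro j
      have h1 : exp (∑ i, σ j i • u i) = exp (∑ i, σ j i • v0 i) := by
        rw [expdot]
        rw [show (∏ i, exp (u i) ^ σ j i) = ∏ i, x i ^ σ j i from
          Finset.prod_congr rfl fun i _ => by rw [hu i]]
        exact hx j
      have hκeq : κ j + ∑ i, σ j i • v0 i = ∑ i, σ j i • u i := by
        rw [hκdef, ← Finset.sum_add_distrib]
        refine Finset.sum_congr rfl fun i _ => ?_
        rw [hwdef]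
        rw [smul_sub]
        abel
      have h2 := hexp (κ j) (∑ i, σ j i • v0 i)
      rw [hκeq, h1] at h2
      exact (right_eq_mul.mp h2)
    set k : Fin n → V := fun i => ∑ j, β i j • κ j with hkdef
    have hexpk : ∀ i, exp (k i) = 1 := by
      intro i
      rw [hkdef]
      dsimp only
      rw [expdot]
      simp [hκ1]
    have hσk : ∀ j, ∑ i, σ j i • k i = κ j := by
      intro j
      calc ∑ i, σ j i • k i
          = ∑ i, ∑ j', (σ j i * β i j') • κ j' := by
            refine Finset.sum_congr rfl fun i _ => ?_
            simp only [hkdef]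
            rw [Finset.smul_sum]
            exact Finset.sum_congr rfl fun j' _ => smul_smul _ _ _
        _ = ∑ j', (∑ i, σ j i * β i j') • κ j' := by
            rw [Finset.sum_comm]
            exact Finset.sum_congr rfl fun j' _ => (Finset.sum_smul).symm
        _ = κ j := by
            simp only [hβ]
            simp [ite_smul, Finset.sum_ite_eq]
    refine ⟨fun i => v0 i + (w i - k i), ?_, ?_⟩
    · intro t
      have hgenZ : ∀ j, ∑ i, σ j i • (w i - k i) = 0 := by
        intro j
        rw [show (∑ i, σ j i • (w i - k i)) = (∑ i, σ j i • w i) - ∑ i, σ j i • k i by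
          rw [← Finset.sum_sub_distrib]; exact Finset.sum_congr rfl fun i _ => smul_sub _ _ _]
        rw [hσk j]
        exact sub_self (κ j)
      have hgen : ∀ s ∈ Set.range (fun j => fun i => ((σ j i : ℚ))),
          ∑ i, s i • (w i - k i) = 0 := by
        rintro _ ⟨j, rfl⟩
        rw [← hgenZ j]
        exact Finset.sum_congr rfl fun i _ => Int.cast_smul_eq_zsmul ℚ _ _
      have hqt : ∑ i, q t i • (w i - k i) = 0 :=
        hker _ _ hgen (q t) (hspan (Submodule.subset_span (Set.mem_range_self t)))
      rw [show (∑ i, q t i • (v0 i + (w i - k i)))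
          = (∑ i, q t i • v0 i) + ∑ i, q t i • (w i - k i) by
        rw [← Finset.sum_add_distrib]; exact Finset.sum_congr rfl fun i _ => smul_add _ _ _]
      rw [hv0 t, hqt, add_zero]
    · funext i
      show exp (v0 i + (w i - k i)) = x i
      have heq : v0 i + (w i - k i) = u i - k i := by rw [hwdef]; dsimp only; abel
      have h2 := hexp (u i - k i) (k i)
      rw [sub_add_cancel, hexpk i, mul_one] at h2
      rw [heq, ← h2, hu i]
end

section
/- Let V be a ℚ-vector space and exp : V → F* a surjective group homomorphism onto the multiplicative group of an algebraically closed field F of characteristic 0, with kernel K. Define cl(A) = exp^{-1}(acl_field(exp(A))) for A ⊆ V, where acl_field denotes field-theoretic algebraic closure inside F (intersected with F*). Then (V, cl) is a pregeometry: cl is extensive, monotone, idempotent, has finite character, and satisfies the exchange property. -/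
open IntermediateField Polynomial

section Aux

variable {F : Type*} [Field F] {k : Type*} [Field k] [Algebra k F]

theorem aux_ofCoeffs {R : Type*} [CommRing R] [Nontrivial R] [Algebra R F] (x : F) (n : ℕ)
    (c : ℕ → R) (hne : ∃ i ∈ Finset.range n, algebraMap R F (c i) ≠ 0)
    (hx : ∑ i ∈ Finset.range n, algebraMap R F (c i) * x ^ i = 0) : IsAlgebraic R x := by
  refine ⟨∑ i ∈ Finset.range n, C (c i) * X ^ i, ?_, ?_⟩
  · obtain ⟨i, hi, hci⟩ := hne
    intro h0
    apply hci
    have : (∑ j ∈ Finset.range n, C (c j) * X ^ j).coeff i = c i := by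
      rw [finset_sum_coeff]
      simp only [coeff_C_mul, coeff_X_pow]
      rw [Finset.sum_eq_single i]
      · simp
      · intro j _ hj; simp [Ne.symm hj]
      · intro h; exact absurd hi h
    rw [h0, coeff_zero] at this
    rw [← this, map_zero]
  · rw [map_sum]
    simpa [Algebra.smul_def] using hx

theorem aux_mono {s t : Set F} (hst : s ⊆ t) {x : F}
    (h : IsAlgebraic ↥(adjoin k s) x) : IsAlgebraic ↥(adjoin k t) x := by
  have hle : (adjoin k s).toSubalgebra ≤ (adjoin k t).toSubalgebra := adjoin.mono k s t hst
  exact IsAlgebraic.tower_top_of_subalgebra_le hle h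

theorem aux_ext {s : Set F} {x : F} (hx : x ∈ s) : IsAlgebraic ↥(adjoin k s) x := by
  have hmem : x ∈ adjoin k s := subset_adjoin k s hx
  have := isAlgebraic_algebraMap (R := ↥(adjoin k s)) (A := F) ⟨x, hmem⟩
  simpa using this

theorem aux_trans {s t : Set F} (hts : ∀ y ∈ t, IsAlgebraic ↥(adjoin k s) y) {x : F}
    (hx : IsAlgebraic ↥(adjoin k t) x) : IsAlgebraic ↥(adjoin k s) x := by
  have hx' : IsAlgebraic ↥(adjoin k (s ∪ t)) x := aux_mono Set.subset_union_right hx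
  set K := adjoin k s
  have hx'' : IsAlgebraic ↥(adjoin K t) x := by
    rw [← adjoin_adjoin_left k s t] at hx'
    exact hx'
  have halg : Algebra.IsAlgebraic ↥K ↥(adjoin K t) :=
    isAlgebraic_adjoin fun y hy => (isAlgebraic_iff_isIntegral.mp (hts y hy))
  have hint : Algebra.IsIntegral ↥K ↥(adjoin K t) := Algebra.isAlgebraic_iff_isIntegral.mp halg
  exact (isIntegral_trans x (isAlgebraic_iff_isIntegral.mp hx'')).isAlgebraic

theorem aux_finchar {s : Set F} {x : F} (h : IsAlgebraic ↥(adjoin k s) x) :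
    ∃ T : Finset F, ↑T ⊆ s ∧ IsAlgebraic ↥(adjoin k (↑T : Set F)) x := by
  classical
  obtain ⟨p, hp0, hpx⟩ := h
  set n := p.natDegree with hn
  have H : ∀ i : ℕ, ∃ T : Finset F, ↑T ⊆ s ∧ (p.coeff i : F) ∈ adjoin k (↑T : Set F) :=
    fun i => exists_finset_of_mem_adjoin (p.coeff i).2
  choose T hT1 hT2 using H
  set Tfin := (Finset.range (n + 1)).biUnion T with hTfin
  refine ⟨Tfin, ?_, ?_⟩
  · intro y hy
    simp only [hTfin, Finset.coe_biUnion, Set.mem_iUnion, Finset.mem_coe] at hy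
    obtain ⟨i, _, hi⟩ := hy
    exact hT1 i hi
  · have hmem : ∀ i, i ∈ Finset.range (n + 1) → (p.coeff i : F) ∈ adjoin k (↑Tfin : Set F) := by
      intro i hi
      refine adjoin.mono k _ _ ?_ (hT2 i)
      intro y hy
      simp only [hTfin, Finset.coe_biUnion, Set.mem_iUnion, Finset.mem_coe]
      exact ⟨i, hi, hy⟩
    set c : ℕ → ↥(adjoin k (↑Tfin : Set F)) :=
      fun i => if h : i ∈ Finset.range (n + 1) then ⟨(p.coeff i : F), hmem i h⟩ else 0 with hc
    refine aux_ofCoeffs x (n + 1) c ⟨n, by simp, ?_⟩ ?_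
    · simp only [hc, dif_pos (Finset.self_mem_range_succ n)]
      have : p.coeff n ≠ 0 := by
        rw [hn]; exact leadingCoeff_ne_zero.mpr hp0
      simpa using fun hh => this (Subtype.coe_injective (by simpa using hh))
    · have hsum : ∑ i ∈ Finset.range (n + 1), algebraMap _ F (c i) * x ^ i
          = ∑ i ∈ Finset.range (n + 1), (p.coeff i : F) * x ^ i := by
        refine Finset.sum_congr rfl fun i hi => ?_
        congr 1
        simp only [hc, dif_pos hi, IntermediateField.algebraMap_apply]
      rw [hsum]
      have := Polynomial.aeval_eq_sum_range (R := ↥(adjoin k s)) (S := F) (p := p) x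
      rw [hpx] at this
      rw [← hn] at this
      simpa [Algebra.smul_def] using this.symm

theorem aux_denoms (K : Type*) [Field K] [Algebra K F] {a b : F}
    (h : IsAlgebraic ↥(adjoin K {b}) a) : IsAlgebraic ↥(Algebra.adjoin K ({b} : Set F)) a := by
  classical
  obtain ⟨p, hp0, hpa⟩ := h
  set n := p.natDegree with hn
  have hrep : ∀ i : ℕ, ∃ fg : K[X] × K[X],
      aeval b fg.2 ≠ 0 ∧ (p.coeff i : F) * aeval b fg.2 = aeval b fg.1 := by
    intro i
    obtain ⟨f, g, hfg⟩ := (mem_adjoin_simple_iff K ((p.coeff i : F))).mp (p.coeff i).2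
    by_cases hg : aeval b g = 0
    · exact ⟨(0, 1), by simp, by simp [hfg, hg]⟩
    · exact ⟨(f, g), hg, by rw [hfg, div_mul_cancel₀ _ hg]⟩
  choose fg hg0 hfg using hrep
  set G : ℕ → F := fun i => aeval b (fg i).2 with hG
  set Fi : ℕ → F := fun i => aeval b (fg i).1 with hFi
  have hGmem : ∀ i, G i ∈ Algebra.adjoin K ({b} : Set F) :=
    fun i => Polynomial.aeval_mem_adjoin_singleton K b
  have hFmem : ∀ i, Fi i ∈ Algebra.adjoin K ({b} : Set F) :=
    fun i => Polynomial.aeval_mem_adjoin_singleton K b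
  set D : F := ∏ j ∈ Finset.range (n + 1), G j with hD
  have hDne : D ≠ 0 := Finset.prod_ne_zero_iff.mpr fun j _ => hg0 j
  set c : ℕ → ↥(Algebra.adjoin K ({b} : Set F)) := fun i =>
    ⟨Fi i * ∏ j ∈ (Finset.range (n + 1)).erase i, G j,
      mul_mem (hFmem i) (prod_mem fun j _ => hGmem j)⟩ with hc
  have key : ∀ i ∈ Finset.range (n + 1),
      (Fi i * ∏ j ∈ (Finset.range (n + 1)).erase i, G j) = (p.coeff i : F) * D := by
    intro i hi
    simp only [hFi, hG, hD]
    rw [← hfg i, ← Finset.mul_prod_erase _ (fun j => aeval b (fg j).2) hi]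
    ring
  refine aux_ofCoeffs a (n + 1) c ⟨n, by simp, ?_⟩ ?_
  · have : algebraMap _ F (c n) = (p.coeff n : F) * D := key n (by simp)
    rw [this]
    have hcn : (p.coeff n : F) ≠ 0 := by
      have : p.coeff n ≠ 0 := by rw [hn]; exact leadingCoeff_ne_zero.mpr hp0
      simpa using fun hh => this (Subtype.coe_injective (by simpa using hh))
    exact mul_ne_zero hcn hDne
  · have heq : ∑ i ∈ Finset.range (n + 1), algebraMap _ F (c i) * a ^ i
        = D * ∑ i ∈ Finset.range (n + 1), (p.coeff i : F) * a ^ i := by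
      rw [Finset.mul_sum]
      refine Finset.sum_congr rfl fun i hi => ?_
      have : algebraMap _ F (c i) = (p.coeff i : F) * D := key i hi
      rw [this]; ring
    rw [heq]
    have hsum : ∑ i ∈ Finset.range (n + 1), (p.coeff i : F) * a ^ i = 0 := by
      have := Polynomial.aeval_eq_sum_range (R := ↥(adjoin K {b})) (S := F) (p := p) a
      rw [hpa] at this
      rw [← hn] at this
      simpa [Algebra.smul_def] using this.symm
    rw [hsum, mul_zero]

set_option maxHeartbeats 1000000 in
theorem aux_exchange {s : Set F} {a b : F}
    (hab : IsAlgebraic ↥(adjoin k (s ∪ {b})) a) (ha : ¬IsAlgebraic ↥(adjoin k s) a) :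
    IsAlgebraic ↥(adjoin k (s ∪ {a})) b := by
  classical
  set K := adjoin k s with hK
  have hab' : IsAlgebraic ↥(adjoin K {b}) a := by
    rw [← adjoin_adjoin_left k s {b}] at hab
    exact hab
  have hbtrans : Transcendental ↥K b := by
    intro hb
    apply ha
    have halg : Algebra.IsAlgebraic ↥K ↥(adjoin K {b}) := by
      refine isAlgebraic_adjoin ?_
      intro y hy
      rw [Set.mem_singleton_iff] at hy
      subst hy
      exact hb.isIntegral
    have hint : Algebra.IsIntegral ↥K ↥(adjoin K {b}) :=
      Algebra.isAlgebraic_iff_isIntegral.mp halg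
    exact (isIntegral_trans a hab'.isIntegral).isAlgebraic
  have hab'' : IsAlgebraic ↥(Algebra.adjoin ↥K ({b} : Set F)) a := aux_denoms ↥K hab'
  have hx1 : AlgebraicIndependent ↥K (fun _ : Unit => b) :=
    algebraicIndependent_unique_type_iff.mpr hbtrans
  have hpair_not : ¬ AlgebraicIndependent ↥K (fun o : Option Unit => o.elim a (fun _ => b)) := by
    rw [hx1.option_iff_transcendental a, show Set.range (fun _ : Unit => b) = {b} from Set.range_const]
    exact fun h => h hab''
  by_contra hgoal
  have hg1 : ¬ IsAlgebraic ↥(adjoin K {a}) b := by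
    intro hh
    apply hgoal
    rw [← adjoin_adjoin_left k s {a}]
    exact hh
  have hg2 : Transcendental ↥(Algebra.adjoin ↥K ({a} : Set F)) b := by
    intro hh
    apply hg1
    have hle : Algebra.adjoin ↥K ({a} : Set F) ≤ (adjoin K {a}).toSubalgebra :=
      Algebra.adjoin_le (by simpa using mem_adjoin_simple_self K a)
    exact IsAlgebraic.tower_top_of_subalgebra_le hle hh
  have hx2 : AlgebraicIndependent ↥K (fun _ : Unit => a) :=
    algebraicIndependent_unique_type_iff.mpr ha
  have hpair2 : AlgebraicIndependent ↥K (fun o : Option Unit => o.elim b (fun _ => a)) := by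
    rw [hx2.option_iff_transcendental b, show Set.range (fun _ : Unit => a) = {a} from Set.range_const]
    exact hg2
  apply hpair_not
  have hcomp : (fun o : Option Unit => o.elim b (fun _ => a)) ∘
      (Equiv.swap (none : Option Unit) (some ())) =
      (fun o : Option Unit => o.elim a (fun _ => b)) := by
    funext o
    rcases o with _ | u
    · simp
    · cases u; simp
  exact (algebraicIndependent_equiv' (Equiv.swap (none : Option Unit) (some ())) hcomp).mpr hpair2

end Aux

theorem stmt_17 {V F : Type*} [AddCommGroup V] [Module ℚ V] [Field F]
    [IsAlgClosed F] [CharZero F]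
    (exp : V → Fˣ) (hexp : ∀ u v : V, exp (u + v) = exp u * exp v)
    (hsurj : Function.Surjective exp)
    (cl : Set V → Set V)
    (hcl : cl = fun A => {v : V |
      IsAlgebraic (↥(IntermediateField.adjoin ℚ ((fun u => ((exp u : F))) '' A)))
        ((exp v : F))}) :
    (∀ A : Set V, A ⊆ cl A) ∧
    (∀ A B : Set V, A ⊆ B → cl A ⊆ cl B) ∧
    (∀ A : Set V, cl (cl A) = cl A) ∧
    (∀ (A : Set V) (v : V), v ∈ cl A → ∃ A₀ : Set V, A₀ ⊆ A ∧ A₀.Finite ∧ v ∈ cl A₀) ∧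
    (∀ (A : Set V) (x y : V), x ∈ cl (A ∪ {y}) → x ∉ cl A → y ∈ cl (A ∪ {x})) := by
  classical
  subst hcl
  set f : V → F := fun u => ((exp u : F)) with hf
  have hext : ∀ A : Set V, A ⊆ {v : V | IsAlgebraic ↥(adjoin ℚ (f '' A)) (f v)} := by
    intro A v hv
    exact aux_ext (Set.mem_image_of_mem f hv)
  refine ⟨hext, ?_, ?_, ?_, ?_⟩
  · intro A B hAB v hv
    exact aux_mono (Set.image_mono hAB) hv
  · intro A
    apply Set.Subset.antisymm
    · intro v hv
      refine aux_trans ?_ hv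
      rintro y ⟨w, hw, rfl⟩
      exact hw
    · exact hext _
  · intro A v hv
    obtain ⟨T, hT1, hT2⟩ := aux_finchar hv
    have hch : ∀ y : F, y ∈ (T : Set F) → ∃ u, u ∈ A ∧ f u = y := by
      intro y hy
      obtain ⟨u, hu, rfl⟩ := hT1 hy
      exact ⟨u, hu, rfl⟩
    choose g hg1 hg2 using hch
    refine ⟨(T.attach.image (fun y => g y.1 (Finset.mem_coe.mpr y.2)) : Finset V), ?_, ?_, ?_⟩
    · intro u hu
      simp only [Finset.coe_image, Set.mem_image, Finset.mem_coe, Finset.mem_attach] at hu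
      obtain ⟨y, -, rfl⟩ := hu
      exact hg1 _ _
    · exact (Finset.finite_toSet _)
    · refine aux_mono ?_ hT2
      intro y hy
      refine ⟨g y (Finset.mem_coe.mpr hy), ?_, hg2 _ _⟩
      simp only [Finset.coe_image, Set.mem_image, Finset.mem_coe, Finset.mem_attach]
      exact ⟨⟨y, hy⟩, trivial, rfl⟩
  · intro A x y hx hxA
    have h1 : f '' (A ∪ {y}) = f '' A ∪ {f y} := by
      rw [Set.image_union, Set.image_singleton]
    have h2 : f '' (A ∪ {x}) = f '' A ∪ {f x} := by
      rw [Set.image_union, Set.image_singleton]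
    have hx' : IsAlgebraic ↥(adjoin ℚ (f '' A ∪ {f y})) (f x) := by
      rw [← h1]; exact hx
    have hres : IsAlgebraic ↥(adjoin ℚ (f '' A ∪ {f x})) (f y) := aux_exchange hx' hxA
    show IsAlgebraic ↥(adjoin ℚ (f '' (A ∪ {x}))) (f y)
    rw [h2]
    exact hres
end

section
/- Let exp : V → F* be a cover of the multiplicative group of an algebraically closed field F of characteristic 0, with kernel K ≅ ℤ generated by z. Let T = exp(L) ⊆ (F*)^n be an irreducible torus in canonical form (x_i = c_i for i ≤ k), where L ⊆ V^n is a linear set with exp(L) = T. Then for each positive integer m, the set exp(L/m) = {exp(u/m) : u ∈ L} is contained in a single m-th root of T: that is, there exist ζ_i ∈ F* with ζ_i^m = c_i such that every element of exp(L/m) satisfies x_i = ζ_i for i ≤ k. -/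
theorem stmt_19 {V F : Type*} [AddCommGroup V] [Module ℚ V] [Field F]
    [IsAlgClosed F] [CharZero F]
    (exp : V → Fˣ) (hexp : ∀ u v : V, exp (u + v) = exp u * exp v)
    (hsurj : Function.Surjective exp)
    (z : V) (hz : z ≠ 0)
    (hker : ∀ v : V, exp v = 1 ↔ ∃ t : ℤ, v = t • z)
    {n r k : ℕ} (hk : k ≤ n)
    (q : Fin r → Fin n → ℚ) (b : Fin r → V) (c : Fin n → Fˣ)
    (m : ℕ) (hm : 0 < m)
    (hT : (fun v : Fin n → V => fun i => exp (v i)) ''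
        {v : Fin n → V | ∀ j, ∑ i, q j i • v i = b j}
      = {x : Fin n → Fˣ | ∀ i : Fin n, (i : ℕ) < k → x i = c i}) :
    ∃ ζ : Fin n → Fˣ, (∀ i : Fin n, (i : ℕ) < k → ζ i ^ m = c i) ∧
      ∀ v ∈ {v : Fin n → V | ∀ j, ∑ i, q j i • v i = b j}, ∀ i : Fin n, (i : ℕ) < k →
        exp ((m : ℚ)⁻¹ • v i) = ζ i := by
  have exp0 : exp 0 = 1 := by
    have h := hexp 0 0
    rw [add_zero] at h
    exact (left_eq_mul.mp h)
  -- L is nonempty: c is in the RHS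
  have hcmem : (fun i => c i) ∈ {x : Fin n → Fˣ | ∀ i : Fin n, (i : ℕ) < k → x i = c i} :=
    fun i _ => rfl
  rw [← hT] at hcmem
  obtain ⟨v₀, hv₀, hv₀e⟩ := hcmem
  have hexpv₀ : ∀ i : Fin n, (i : ℕ) < k → exp (v₀ i) = c i := by
    intro i _; exact congrFun hv₀e i
  -- key: for i < k, all v ∈ L have v i = v₀ i
  have key : ∀ v ∈ {v : Fin n → V | ∀ j, ∑ i, q j i • v i = b j},
      ∀ i : Fin n, (i : ℕ) < k → v i = v₀ i := by
    intro v hv i hi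
    have hline : ∀ qq : ℚ, (fun l => v₀ l + qq • (v l - v₀ l)) ∈
        {v : Fin n → V | ∀ j, ∑ i, q j i • v i = b j} := by
      intro qq j
      have h1 := hv₀ j
      have h2 := hv j
      have : ∑ l, q j l • (v₀ l + qq • (v l - v₀ l))
          = ∑ l, (q j l • v₀ l + qq • (q j l • v l) - qq • (q j l • v₀ l)) := by
        refine Finset.sum_congr rfl fun l _ => ?_
        module
      rw [this]
      rw [Finset.sum_sub_distrib, Finset.sum_add_distrib, ← Finset.smul_sum, ← Finset.smul_sum,
        h1, h2]
      abel
    have hexpq : ∀ qq : ℚ, exp (qq • (v i - v₀ i)) = 1 := by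
      intro qq
      have hmem : (fun l => exp (v₀ l + qq • (v l - v₀ l))) ∈
          {x : Fin n → Fˣ | ∀ i : Fin n, (i : ℕ) < k → x i = c i} := by
        rw [← hT]; exact ⟨_, hline qq, rfl⟩
      have h1 : exp (v₀ i + qq • (v i - v₀ i)) = c i := hmem i hi
      have h2 : exp (v₀ i) = c i := hexpv₀ i hi
      have h3 := hexp (v₀ i) (qq • (v i - v₀ i))
      rw [h1, h2] at h3
      exact left_eq_mul.mp h3
    obtain ⟨t, ht⟩ := (hker _).1 (by simpa using hexpq 1)
    rw [← Int.cast_smul_eq_zsmul ℚ] at ht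
    by_cases htz : (t : ℚ) = 0
    · rw [htz, zero_smul, sub_eq_zero] at ht
      exact ht
    · exfalso
      obtain ⟨s, hs⟩ := (hker _).1 (hexpq (1 / (2 * t)))
      rw [← Int.cast_smul_eq_zsmul ℚ] at hs
      rw [ht, smul_smul] at hs
      have hcoef : (1 / (2 * (t : ℚ))) * t = 1 / 2 := by
        field_simp
      rw [hcoef] at hs
      have : ((1 / 2 : ℚ) - s) • z = 0 := by rw [sub_smul, hs, sub_self]
      have hne : (1 / 2 : ℚ) - s ≠ 0 := by
        intro h
        have h1 : (2 : ℚ) * s = 1 := by linarith [sub_eq_zero.mp h]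
        have h2 : (2 * s : ℤ) = 1 := by exact_mod_cast h1
        omega
      exact hz (by
        have := smul_eq_zero.mp this
        tauto)
  -- define ζ
  have hmQ : (m : ℚ) ≠ 0 := Nat.cast_ne_zero.mpr hm.ne'
  have exppow : ∀ (t : ℕ) (u : V), exp u ^ t = exp (t • u) := by
    intro t u
    induction t with
    | zero => simp [exp0]
    | succ s ih => rw [pow_succ, ih, succ_nsmul, hexp]
  refine ⟨fun i => exp ((m : ℚ)⁻¹ • v₀ i), ?_, ?_⟩
  · intro i hi
    rw [exppow m, ← Nat.cast_smul_eq_nsmul ℚ, smul_smul, mul_inv_cancel₀ hmQ, one_smul]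
    exact hexpv₀ i hi
  · intro v hv i hi
    rw [key v hv i hi]
end
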